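/- arXiv:1002.0803 — 2 statements merged into one kernel-verified Lean document; each statement's English description precedes it below -/
import Mathlib

section
/- Let $\mathfrak{m} = \bigoplus_{i<0} \mathfrak{g}_i$ be a finite-dimensional graded nilpotent Lie algebra over $\mathbb{C}$ generated by $\mathfrak{g}_{-1}$, with $\dim \mathfrak{g}_{-1} = 2$. If there exists a nonzero grading-zero derivation $D$ of $\mathfrak{m}$ of rank 1 as a linear map on $\mathfrak{g}_{-1}$ (i.e. $D = p \otimes \zeta$ for some covector $p$ and vector $\zeta$) acting trivially on $\mathfrak{g}_i$ for all $i < -1$, then $p(\zeta) = 0$. -/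
/-- For a finite-dimensional GNLA `m = ⊕_{i<0} g i` over ℂ generated by
`g (-1)` with `dim g (-1) = 2` and `g (-2) ≠ 0`, any nonzero rank-one grading-zero
derivation `D = p ⊗ ζ` acting trivially on `g i`, `i < -1`, satisfies `p ζ = 0`. -/
theorem stmt0 {L : Type*} [LieRing L] [LieAlgebra ℂ L] [FiniteDimensional ℂ L]
    (g : ℤ → Submodule ℂ L)
    (hinternal : DirectSum.IsInternal g)
    (hneg : ∀ i : ℤ, 0 ≤ i → g i = ⊥)
    (hbr : ∀ i j : ℤ, ∀ x ∈ g i, ∀ y ∈ g j, ⁅x, y⁆ ∈ g (i + j))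
    (hfund : LieSubalgebra.lieSpan ℂ L ((g (-1) : Submodule ℂ L) : Set L) = ⊤)
    (hdim : Module.finrank ℂ (g (-1)) = 2)
    (hg2 : g (-2) ≠ ⊥)
    (D : L →ₗ[ℂ] L)
    (hder : ∀ x y : L, D ⁅x, y⁆ = ⁅D x, y⁆ + ⁅x, D y⁆)
    (hgrade : ∀ i : ℤ, ∀ x ∈ g i, D x ∈ g i)
    (p : L →ₗ[ℂ] ℂ) (ζ : L) (hζmem : ζ ∈ g (-1)) (hζ : ζ ≠ 0) (hp : p ≠ 0)
    (hrank1 : ∀ v ∈ g (-1), D v = p v • ζ)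
    (hDne : D ≠ 0)
    (htriv : ∀ i : ℤ, i < -1 → ∀ v ∈ g i, D v = 0) :
    p ζ = 0 := by
  by_contra hpz
  -- key relation from derivation property landing in g(-2)
  have hrel : ∀ x ∈ g (-1), ∀ y ∈ g (-1), p x • ⁅ζ, y⁆ + p y • ⁅x, ζ⁆ = 0 := by
    intro x hx y hy
    have hxy : ⁅x, y⁆ ∈ g (-2) := by
      have := hbr (-1) (-1) x hx y hy
      norm_num at this
      exact this
    have h0 : D ⁅x, y⁆ = 0 := htriv (-2) (by norm_num) _ hxy
    have h1 := hder x y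
    rw [h0, hrank1 x hx, hrank1 y hy, smul_lie, lie_smul] at h1
    exact h1.symm
  -- ζ brackets trivially with g(-1)
  have hζbr : ∀ y ∈ g (-1), ⁅ζ, y⁆ = 0 := by
    intro y hy
    have := hrel ζ hζmem y hy
    rw [lie_self, smul_zero, add_zero, smul_eq_zero] at this
    exact this.resolve_left hpz
  -- the kernel of p inside g(-1) is at most one-dimensional
  set K : Submodule ℂ L := LinearMap.ker p ⊓ g (-1) with hK
  have hKlt : K < g (-1) := by
    refine lt_of_le_of_ne inf_le_right ?_
    intro h
    have : ζ ∈ K := h ▸ hζmem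
    exact hpz (this.1)
  have hKrank : Module.finrank ℂ K ≤ 1 := by
    have := Submodule.finrank_lt_finrank_of_lt (K := ℂ) (V := L) hKlt
    omega
  obtain ⟨v, hv⟩ := (Submodule.finrank_le_one_iff_isPrincipal K).mp hKrank
  -- any two elements of K commute
  have hKcomm : ∀ a ∈ K, ∀ b ∈ K, ⁅a, b⁆ = 0 := by
    intro a ha b hb
    rw [hv] at ha hb
    obtain ⟨c, rfl⟩ := Submodule.mem_span_singleton.mp ha
    obtain ⟨d, rfl⟩ := Submodule.mem_span_singleton.mp hb
    rw [smul_lie, lie_smul, lie_self, smul_zero, smul_zero]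
  -- hence g(-1) is abelian: all brackets vanish
  have habel : ∀ x ∈ g (-1), ∀ y ∈ g (-1), ⁅x, y⁆ = 0 := by
    intro x hx y hy
    have hx' : x - (p x / p ζ) • ζ ∈ K := by
      refine ⟨?_, Submodule.sub_mem _ hx (Submodule.smul_mem _ _ hζmem)⟩
      simp [LinearMap.mem_ker, div_mul_cancel₀ _ hpz]
    have hy' : y - (p y / p ζ) • ζ ∈ K := by
      refine ⟨?_, Submodule.sub_mem _ hy (Submodule.smul_mem _ _ hζmem)⟩
      simp [LinearMap.mem_ker, div_mul_cancel₀ _ hpz]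
    have hb := hKcomm _ hx' _ hy'
    have hζy : ⁅ζ, y⁆ = 0 := hζbr y hy
    have hxζ : ⁅x, ζ⁆ = 0 := by
      have := hζbr x hx
      rw [← lie_skew, this, neg_zero]
    rw [sub_lie, lie_sub, lie_sub, smul_lie, lie_smul, lie_smul, hζy, hxζ, smul_lie,
      lie_self] at hb
    simpa using hb
  -- g(-1) is then a Lie subalgebra containing its own lieSpan, so L = g(-1)
  let S : LieSubalgebra ℂ L :=
    { g (-1) with
      lie_mem' := fun {x y} hx hy => by
        have : ⁅x, y⁆ = 0 := habel x hx y hy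
        rw [this]; exact (g (-1)).zero_mem }
  have hS : LieSubalgebra.lieSpan ℂ L ((g (-1) : Submodule ℂ L) : Set L) ≤ S :=
    LieSubalgebra.lieSpan_le.mpr (fun x hx => hx)
  rw [hfund] at hS
  have hall : ∀ x : L, x ∈ g (-1) := fun x => hS (LieSubalgebra.mem_top x)
  -- but g(-2) is nonzero and disjoint from g(-1): contradiction
  obtain ⟨w, hwmem, hw⟩ := (Submodule.ne_bot_iff _).mp hg2
  have hdisj : Disjoint (g (-2)) (g (-1)) :=
    hinternal.submodule_iSupIndep.pairwiseDisjoint (show (-2 : ℤ) ≠ -1 by norm_num)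
  exact hw (Submodule.disjoint_def.mp hdisj w hwmem (hall w))
end

section
/- Let $\mathfrak{h}_0 \subset \mathfrak{gl}(V)$ be a Lie subalgebra over $\mathbb{C}$, $V$ finite-dimensional, and suppose $\mathfrak{h}_0$ contains no rank-one element $p \otimes q$ ($p \in V^*\setminus 0$, $q \in V \setminus 0$). Then for the classical (Spencer) prolongations $\mathfrak{h}_k = \{u \in S^{k+1}V^* \otimes V : u(v_1, \ldots, v_k, \cdot) \in \mathfrak{h}_0 \ \forall v_i \in V\}$, there exists $N$ with $\mathfrak{h}_N = 0$ (i.e. $\mathfrak{h}_0$ is of finite type). -/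
/-!
Fix a basis `b` of `V`, put `S = k[X_i]` and, for each functional `θ` on `End V` vanishing on
`h₀`, let `r_θ ∈ Sⁿ` have `j`-th entry `∑ᵢ θ(bᵢ* ⊗ b_j) X_i`; let `K` be the `S`-span of the `r_θ`.
An element `u` of the `N`-th prolongation defines the functional `X^α e_j ↦ b_j*(u(b_α))` on `Sⁿ`
(supported in degree `N + 1`), and the prolongation condition says exactly that it kills every
`s • r_θ`, hence all of `K`.

At a point `p ≠ 0` the values `r_θ(p)` span `kⁿ`, since a vector `q` orthogonal to all of them
would make `p ⊗ q` a rank-one element of `h₀`. Cramer's rule on `n` independent ones gives `s`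
with `s • Sⁿ ⊆ K` and `s(p) ≠ 0`, so by the Nullstellensatz `X_i^d • Sⁿ ⊆ K` for some `d`. Once
`N ≥ n d`, every monomial of degree `N + 1` is divisible by some `X_i^d`, and `u` vanishes on all
tuples of basis vectors.
-/

open Finset Matrix MvPolynomial

section MultiIndex

variable {ι : Type*} {m : ℕ}

noncomputable def multiIndex (f : Fin m → ι) : ι →₀ ℕ :=
  ∑ t, Finsupp.single (f t) 1

theorem multiIndex_apply [DecidableEq ι] (f : Fin m → ι) (i : ι) :
    multiIndex f i = #{t | f t = i} := by
  simp [multiIndex, Finsupp.single_apply]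

theorem multiIndex_comp_perm (f : Fin m → ι) (σ : Equiv.Perm (Fin m)) :
    multiIndex (f ∘ σ) = multiIndex f :=
  Equiv.sum_comp σ fun t => Finsupp.single (f t) 1

theorem multiIndex_snoc (g : Fin m → ι) (i : ι) :
    multiIndex (Fin.snoc g i : Fin (m + 1) → ι) = multiIndex g + Finsupp.single i 1 := by
  simp [multiIndex, Fin.sum_univ_castSucc]

theorem exists_perm_of_multiIndex_eq [DecidableEq ι] {f g : Fin m → ι}
    (h : multiIndex f = multiIndex g) :
    ∃ σ : Equiv.Perm (Fin m), f = g ∘ σ := by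
  have hfib (i : ι) : {t // f t = i} ≃ {t // g t = i} := by
    refine Fintype.equivOfCardEq ?_
    simpa only [Fintype.card_subtype, multiIndex_apply] using DFunLike.congr_fun h i
  exact ⟨Equiv.ofFiberEquiv hfib, funext fun t => (Equiv.ofFiberEquiv_map hfib t).symm⟩

theorem exists_multiIndex_eq_of_multiIndex_eq_add_single {f : Fin (m + 1) → ι} {β : ι →₀ ℕ}
    {i : ι} (h : multiIndex f = β + Finsupp.single i 1) : ∃ g : Fin m → ι, multiIndex g = β := by
  obtain ⟨t, ht⟩ : ∃ t, f t = i := by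
    classical
    have : 0 < multiIndex f i := by simp [h]
    simpa [multiIndex_apply, Finset.card_pos, Finset.filter_nonempty_iff] using this
  set f' := f ∘ Equiv.swap t (Fin.last m)
  refine ⟨Fin.init f', add_right_cancel (b := Finsupp.single i 1) ?_⟩
  rw [← multiIndex_snoc, ← h, ← multiIndex_comp_perm f (Equiv.swap t (Fin.last m))]
  convert congrArg multiIndex (Fin.snoc_init_self f') using 3
  simp [f', ht]

end MultiIndex

theorem Matrix.det_smul_mem_span_rows {S ι : Type*} [CommRing S] [Fintype ι] [DecidableEq ι]
    (R : Matrix ι ι S) (x : ι → S) : R.det • x ∈ Submodule.span S (Set.range R) := by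
  have hx : R.det • x = (x ᵥ* R.adjugate) ᵥ* R := by
    rw [Matrix.vecMul_vecMul, Matrix.adjugate_mul, Matrix.vecMul_smul, Matrix.vecMul_one]
  rw [hx, Matrix.vecMul_eq_sum]
  exact Submodule.sum_mem _ fun k _ => Submodule.smul_mem _ _ (Submodule.subset_span ⟨k, rfl⟩)

theorem exists_linearIndependent_comp_of_span_eq_top {K V κ ι : Type*} [Field K]
    [AddCommGroup V] [Module K V] [Module.Finite K V] [Fintype ι]
    (hV : Module.finrank K V = Fintype.card ι)
    {v : κ → V} (hv : Submodule.span K (Set.range v) = ⊤) :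
    ∃ l : ι → κ, LinearIndependent K (v ∘ l) := by
  obtain ⟨κ', a, -, hspan, hli⟩ := exists_linearIndependent' K v
  let B := Module.Basis.mk hli (by rw [hspan, hv])
  have := FiniteDimensional.fintypeBasisIndex B
  let e : ι ≃ κ' := Fintype.equivOfCardEq (by rw [← hV, Module.finrank_eq_card_basis B])
  exact ⟨a ∘ e, hli.comp e e.injective⟩

theorem exists_mem_colon_map_ne_zero {S F κ ι : Type*} [CommRing S] [Field F] [Fintype ι]
    [DecidableEq ι] (φ : S →+* F) {r : κ → ι → S}
    (hr : Submodule.span F (Set.range fun l => φ ∘ r l) = ⊤) :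
    ∃ s ∈ (Submodule.span S (Set.range r)).colon Set.univ, φ s ≠ 0 := by
  obtain ⟨l, hl⟩ := exists_linearIndependent_comp_of_span_eq_top
    (Module.finrank_fintype_fun_eq_card F) hr
  let R : Matrix ι ι S := Matrix.of fun i => r (l i)
  refine ⟨R.det, Submodule.mem_colon.mpr fun x _ => ?_, ?_⟩
  · refine Submodule.span_mono ?_ (R.det_smul_mem_span_rows x)
    rintro _ ⟨i, rfl⟩
    exact ⟨l i, rfl⟩
  · rw [RingHom.map_det, ← isUnit_iff_ne_zero, ← Matrix.isUnit_iff_isUnit_det,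
      ← Matrix.linearIndependent_rows_iff_isUnit]
    exact hl

theorem MvPolynomial.exists_X_pow_mem_of_zeroLocus_subset {σ k : Type*} [Field k]
    [IsAlgClosed k] [Finite σ] {I : Ideal (MvPolynomial σ k)} (hI : zeroLocus k I ⊆ {0}) :
    ∃ d : ℕ, ∀ i, X i ^ d ∈ I := by
  have hrad (i : σ) : X i ∈ I.radical := by
    rw [← vanishingIdeal_zeroLocus_eq_radical (K := k)]
    intro p hp
    simp [Set.mem_singleton_iff.mp (hI hp)]
  choose m hm using hrad
  obtain ⟨d, hd⟩ := (Set.finite_range m).bddAbove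
  exact ⟨d, fun i => I.pow_mem_of_pow_mem (hm i) (hd ⟨i, rfl⟩)⟩

theorem LinearMap.eq_zero_of_mem_span_of_smul {R S M P : Type*} [CommSemiring R] [Semiring S]
    [Algebra R S] [AddCommMonoid M] [Module S M] [Module R M] [IsScalarTower R S M]
    [AddCommMonoid P] [Module R P] (φ : M →ₗ[R] P) {t : Set M}
    (ht : ∀ s : S, ∀ g ∈ t, φ (s • g) = 0) {g : M} (hg : g ∈ Submodule.span S t) : φ g = 0 := by
  let P : Submodule S M :=
    { carrier := {g | ∀ s : S, φ (s • g) = 0}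
      add_mem' := fun hx hy s => by simp [smul_add, hx s, hy s]
      zero_mem' := fun s => by simp
      smul_mem' := fun a x hx s => by simpa [smul_smul] using hx (s * a) }
  simpa using (Submodule.span_le (p := P)).mpr (fun g hg s => ht s g hg) hg 1

section Symbol

variable {k V ι : Type*} [Field k] [AddCommGroup V] [Module k V] [Fintype ι] [DecidableEq ι]

noncomputable def symbolRelation (b : Module.Basis ι k V) (θ : Module.Dual k (V →ₗ[k] V)) :
    ι → MvPolynomial ι k :=
  fun j => ∑ i, C (θ ((b.coord i).smulRight (b j))) * X i

noncomputable def symbolRelations (b : Module.Basis ι k V) (h₀ : Submodule k (V →ₗ[k] V)) :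
    Submodule (MvPolynomial ι k) (ι → MvPolynomial ι k) :=
  Submodule.span _ (Set.range fun θ : h₀.dualAnnihilator => symbolRelation b θ)

theorem eval_symbolRelation (b : Module.Basis ι k V) (θ : Module.Dual k (V →ₗ[k] V))
    (p : ι → k) (j : ι) :
    eval p (symbolRelation b θ j) = θ ((b.dualBasis.equivFun.symm p).smulRight (b j)) := by
  have : (b.dualBasis.equivFun.symm p).smulRight (b j) =
      ∑ i, p i • (b.coord i).smulRight (b j) := by
    ext v; simp [Finset.sum_smul, smul_smul]
  rw [this, map_sum]
  simp [symbolRelation, mul_comm]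

theorem span_symbolRelation_eval_eq_top (b : Module.Basis ι k V) {h₀ : Submodule k (V →ₗ[k] V)}
    {f : V →ₗ[k] k} (hf : ∀ q : V, f.smulRight q ∈ h₀ → q = 0) :
    Submodule.span k
      (Set.range fun θ : h₀.dualAnnihilator => fun j => θ.1 (f.smulRight (b j))) = ⊤ := by
  by_contra hne
  obtain ⟨φ, hφ, hle⟩ := Submodule.exists_le_ker_of_lt_top _ (lt_top_iff_ne_top.mpr hne)
  set e : ι → k := fun i => φ fun j => if i = j then 1 else 0
  have hφe (x : ι → k) : φ x = ∑ i, x i * e i := by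
    simpa [smul_eq_mul] using φ.pi_apply_eq_sum_univ x
  have hq : f.smulRight (∑ i, e i • b i) ∈ h₀ := by
    refine (Subspace.forall_mem_dualAnnihilator_apply_eq_zero_iff h₀ _).mp fun θ hθ => ?_
    have := hle (Submodule.subset_span ⟨⟨θ, hθ⟩, rfl⟩)
    simp only [LinearMap.mem_ker, hφe] at this
    rw [← LinearMap.smulRightₗ_apply, map_sum, map_sum, ← this]
    simp [mul_comm]
  have he : e = 0 := funext (Fintype.linearIndependent_iff.mp b.linearIndependent e (hf _ hq))
  exact hφ (LinearMap.ext fun x => by simp [hφe, he])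

theorem zeroLocus_colon_symbolRelations_subset (b : Module.Basis ι k V)
    {h₀ : Submodule k (V →ₗ[k] V)}
    (hrank : ¬ ∃ (p : V →ₗ[k] k) (q : V), p ≠ 0 ∧ q ≠ 0 ∧ p.smulRight q ∈ h₀) :
    zeroLocus k ((symbolRelations b h₀).colon Set.univ) ⊆ {0} := by
  intro p hp
  by_contra hp0
  have hf (q : V) (hq : (b.dualBasis.equivFun.symm p).smulRight q ∈ h₀) : q = 0 := by
    by_contra hq0
    exact hrank ⟨_, q, (LinearEquiv.map_ne_zero_iff _).mpr hp0, hq0, hq⟩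
  have hspan : Submodule.span k
      (Set.range fun θ : h₀.dualAnnihilator => eval p ∘ symbolRelation b θ) = ⊤ := by
    simpa only [Function.comp_def, eval_symbolRelation] using span_symbolRelation_eval_eq_top b hf
  obtain ⟨s, hs, hne⟩ := exists_mem_colon_map_ne_zero (eval p) hspan
  exact hne (by simpa using hp s hs)

end Symbol

section Prolongation

variable {k V ι : Type*} [Field k] [AddCommGroup V] [Module k V] {N : ℕ}
  (u : MultilinearMap k (fun _ : Fin (N + 1) => V) V) (b : Module.Basis ι k V)

open Classical in
/-- `X^α ↦ u (b ∘ f)` for any `f` of multi-index `α` (independent of `f` when `u` is symmetric);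
monomials of degree other than `N + 1` go to `0`. -/
noncomputable def monomialEval : MvPolynomial ι k →ₗ[k] V :=
  (basisMonomials ι k).constr k fun α =>
    if h : ∃ f : Fin (N + 1) → ι, multiIndex f = α then u (b ∘ h.choose) else 0

open Classical in
theorem monomialEval_monomial (α : ι →₀ ℕ) : monomialEval u b (monomial α 1) =
    if h : ∃ f : Fin (N + 1) → ι, multiIndex f = α then u (b ∘ h.choose) else 0 :=
  (basisMonomials ι k).constr_basis k _ α

theorem monomialEval_monomial_multiIndex
    (hsym : ∀ (σ : Equiv.Perm (Fin (N + 1))) (m : Fin (N + 1) → V), u (m ∘ σ) = u m)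
    (f : Fin (N + 1) → ι) : monomialEval u b (monomial (multiIndex f) 1) = u (b ∘ f) := by
  classical
  have h : ∃ g : Fin (N + 1) → ι, multiIndex g = multiIndex f := ⟨f, rfl⟩
  obtain ⟨σ, hσ⟩ := exists_perm_of_multiIndex_eq h.choose_spec
  rw [monomialEval_monomial, dif_pos h, hσ, ← Function.comp_assoc, hsym]

theorem monomialEval_monomial_of_forall_ne {α : ι →₀ ℕ}
    (h : ∀ f : Fin (N + 1) → ι, multiIndex f ≠ α) : monomialEval u b (monomial α 1) = 0 := by
  classical
  rw [monomialEval_monomial, dif_neg (not_exists.mpr h)]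

/-- For `β = multiIndex g` with `g : Fin N → ι`, `partialEval u b (X^β) = u (Fin.snoc (b ∘ g) ·)`.
-/
noncomputable def partialEval [Fintype ι] : MvPolynomial ι k →ₗ[k] V →ₗ[k] V :=
  ∑ i, LinearMap.smulRightₗ (b.coord i) ∘ₗ monomialEval u b ∘ₗ LinearMap.mulRight k (X i)

theorem partialEval_apply_basis [Fintype ι] [DecidableEq ι] (s : MvPolynomial ι k) (i : ι) :
    partialEval u b s (b i) = monomialEval u b (s * X i) := by
  simp [partialEval, Finsupp.single_apply]

theorem partialEval_mem [Fintype ι] [DecidableEq ι] {h₀ : Submodule k (V →ₗ[k] V)}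
    (hsym : ∀ (σ : Equiv.Perm (Fin (N + 1))) (m : Fin (N + 1) → V), u (m ∘ σ) = u m)
    (hsub : ∀ v : Fin N → V, ∃ A ∈ h₀, ∀ w : V, u (Fin.snoc v w) = A w)
    (s : MvPolynomial ι k) : partialEval u b s ∈ h₀ := by
  induction s using MvPolynomial.induction_on' with
  | monomial β c =>
    rw [← mul_one c, ← smul_eq_mul, ← smul_monomial, map_smul]
    refine h₀.smul_mem c ?_
    by_cases hβ : ∃ g : Fin N → ι, multiIndex g = β
    · obtain ⟨g, rfl⟩ := hβ
      obtain ⟨A, hA, hAu⟩ := hsub (b ∘ g)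
      convert hA
      refine b.ext fun i => ?_
      rw [partialEval_apply_basis, X, monomial_mul, one_mul, ← multiIndex_snoc,
        monomialEval_monomial_multiIndex u b hsym, Fin.comp_snoc, hAu]
    · convert h₀.zero_mem
      refine b.ext fun i => ?_
      rw [partialEval_apply_basis, X, monomial_mul, one_mul, LinearMap.zero_apply]
      exact monomialEval_monomial_of_forall_ne u b fun f hf =>
        hβ (exists_multiIndex_eq_of_multiIndex_eq_add_single hf)
  | add p q hp hq => rw [map_add]; exact h₀.add_mem hp hq

noncomputable def symbolPairing [Fintype ι] : (ι → MvPolynomial ι k) →ₗ[k] k :=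
  ∑ j, b.coord j ∘ₗ monomialEval u b ∘ₗ LinearMap.proj j

theorem symbolPairing_smul_symbolRelation [Fintype ι] [DecidableEq ι] (s : MvPolynomial ι k)
    (θ : Module.Dual k (V →ₗ[k] V)) :
    symbolPairing u b (s • symbolRelation b θ) = θ (partialEval u b s) := by
  have hθ (i : ι) : θ ((b.coord i).smulRight (monomialEval u b (s * X i))) =
      ∑ j, b.coord j (monomialEval u b (s * X i)) * θ ((b.coord i).smulRight (b j)) := by
    conv_lhs => rw [← b.sum_repr (monomialEval u b (s * X i)), ← LinearMap.smulRightₗ_apply,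
      map_sum, map_sum]
    simp
  have hX (i : ι) (c : k) : s * (C c * X i) = c • (s * X i) := by
    rw [smul_eq_C_mul]; ring
  simp only [symbolPairing, symbolRelation, partialEval, LinearMap.sum_apply,
    LinearMap.comp_apply, LinearMap.proj_apply, Pi.smul_apply, smul_eq_mul, Finset.mul_sum, hX]
  simp only [map_sum, map_smul, LinearMap.mulRight_apply, LinearMap.smulRightₗ_apply, hθ,
    smul_eq_mul]
  rw [Finset.sum_comm]
  simp only [mul_comm]

theorem symbolPairing_eq_zero_of_mem [Fintype ι] [DecidableEq ι] {h₀ : Submodule k (V →ₗ[k] V)}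
    (hsym : ∀ (σ : Equiv.Perm (Fin (N + 1))) (m : Fin (N + 1) → V), u (m ∘ σ) = u m)
    (hsub : ∀ v : Fin N → V, ∃ A ∈ h₀, ∀ w : V, u (Fin.snoc v w) = A w)
    {G : ι → MvPolynomial ι k} (hG : G ∈ symbolRelations b h₀) : symbolPairing u b G = 0 := by
  refine (symbolPairing u b).eq_zero_of_mem_span_of_smul ?_ hG
  rintro s _ ⟨θ, rfl⟩
  rw [symbolPairing_smul_symbolRelation]
  exact (Submodule.mem_dualAnnihilator _).mp θ.2 _ (partialEval_mem u b hsym hsub s)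

theorem symbolPairing_smul_single [Fintype ι] [DecidableEq ι] (s : MvPolynomial ι k) (j : ι) :
    symbolPairing u b (s • Pi.single j 1) = b.coord j (monomialEval u b s) := by
  simp [symbolPairing, Pi.single_apply, apply_ite]

theorem eq_zero_of_X_pow_mem_colon [Fintype ι] [DecidableEq ι] {h₀ : Submodule k (V →ₗ[k] V)}
    (hsym : ∀ (σ : Equiv.Perm (Fin (N + 1))) (m : Fin (N + 1) → V), u (m ∘ σ) = u m)
    (hsub : ∀ v : Fin N → V, ∃ A ∈ h₀, ∀ w : V, u (Fin.snoc v w) = A w) {d : ℕ}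
    (hd : ∀ i, X i ^ d ∈ (symbolRelations b h₀).colon Set.univ)
    (hN : Fintype.card ι * d ≤ N) : u = 0 := by
  refine Module.Basis.ext_multilinear (fun _ => b) fun f => ?_
  obtain ⟨i, hi⟩ := Fintype.exists_lt_card_fiber_of_mul_lt_card f (n := d) (by simp; omega)
  rw [← multiIndex_apply] at hi
  have hmem : monomial (multiIndex f) 1 ∈ (symbolRelations b h₀).colon Set.univ := by
    have : monomial (multiIndex f) (1 : k) =
        monomial (multiIndex f - Finsupp.single i d) 1 * X i ^ d := by
      rw [X_pow_eq_monomial, monomial_mul, one_mul,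
        tsub_add_cancel_of_le (Finsupp.single_le_iff.mpr hi.le)]
    exact this ▸ Ideal.mul_mem_left _ _ (hd i)
  refine b.forall_coord_eq_zero_iff.mp fun j => ?_
  have := symbolPairing_eq_zero_of_mem u b hsym hsub
    (Submodule.mem_colon.mp hmem (Pi.single j 1) trivial)
  rwa [symbolPairing_smul_single, monomialEval_monomial_multiIndex u b hsym] at this

end Prolongation

theorem stmt16_general {V : Type*} [AddCommGroup V] [Module ℂ V] [FiniteDimensional ℂ V]
    (h₀ : Submodule ℂ (V →ₗ[ℂ] V))
    (hnorank1 : ¬ ∃ (p : V →ₗ[ℂ] ℂ) (q : V), p ≠ 0 ∧ q ≠ 0 ∧ p.smulRight q ∈ h₀) :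
    ∃ N : ℕ, ∀ u : MultilinearMap ℂ (fun _ : Fin (N + 1) => V) V,
      (∀ (σ : Equiv.Perm (Fin (N + 1))) (m : Fin (N + 1) → V), u (m ∘ σ) = u m) →
      (∀ v : Fin N → V, ∃ A ∈ h₀, ∀ w : V, u (Fin.snoc v w) = A w) →
      u = 0 := by
  let b := Module.finBasis ℂ V
  obtain ⟨d, hd⟩ :=
    exists_X_pow_mem_of_zeroLocus_subset (zeroLocus_colon_symbolRelations_subset b hnorank1)
  exact ⟨Fintype.card (Fin _) * d, fun u hsym hsub =>
    eq_zero_of_X_pow_mem_colon u b hsym hsub hd le_rfl⟩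

/-- Guillemin–Quillen–Singer criterion, stated direction: if a Lie
subalgebra `h₀ ⊆ gl(V)` over ℂ contains no nonzero rank-one element `p ⊗ q`, then
some Spencer prolongation `h_N ⊆ S^{N+1}V* ⊗ V` (symmetric multilinear maps whose
partial evaluations in the last slot lie in `h₀`) vanishes: `h₀` is of finite type. -/
theorem stmt16 {V : Type*} [AddCommGroup V] [Module ℂ V] [FiniteDimensional ℂ V]
    (h₀ : Submodule ℂ (V →ₗ[ℂ] V))
    (hlie : ∀ A ∈ h₀, ∀ B ∈ h₀, A ∘ₗ B - B ∘ₗ A ∈ h₀)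
    (hnorank1 : ¬ ∃ (p : V →ₗ[ℂ] ℂ) (q : V), p ≠ 0 ∧ q ≠ 0 ∧ p.smulRight q ∈ h₀) :
    ∃ N : ℕ, ∀ u : MultilinearMap ℂ (fun _ : Fin (N + 1) => V) V,
      (∀ (σ : Equiv.Perm (Fin (N + 1))) (m : Fin (N + 1) → V), u (m ∘ σ) = u m) →
      (∀ v : Fin N → V, ∃ A ∈ h₀, ∀ w : V, u (Fin.snoc v w) = A w) →
      u = 0 :=
  stmt16_general h₀ hnorank1
end
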